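/- Setting all variables x_i := x (a single variable) in the decomposition theorem: for any weak composition α of length n and σ ∈ S_n, |SSAF_σ(α)| = Σ_β N_β, where the sum is over β σ-extendable to α and N_β is the number of SSAFs of shape β with basement σ with no non-basement 1-cells. -/

import Mathlib

/-- A semi-skyline augmented filling of shape `α` with basement `σ`.
Entries are positive naturals; `σ i` as a value in `[n]` is `(σ i : ℕ) + 1`.
Conditions: positivity, basement, no descents, type A and type B inversion triples. -/
def IsSSAF (n : ℕ) (α : Fin n → ℕ) (σ : Equiv.Perm (Fin n)) (F : Fin n → ℕ → ℕ) : Prop :=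
  (∀ i j, j ≤ α i → 1 ≤ F i j) ∧
  (∀ i, F i 0 = (σ i : ℕ) + 1) ∧
  (∀ i j, j + 1 ≤ α i → F i (j + 1) ≤ F i j) ∧
  (∀ ℓ r : Fin n, ∀ i : ℕ, ℓ < r → α r ≤ α ℓ → i + 1 ≤ α r →
    ¬ (F ℓ (i + 1) ≤ F r (i + 1) ∧ F r (i + 1) ≤ F ℓ i)) ∧
  (∀ ℓ r : Fin n, ∀ i : ℕ, ℓ < r → α ℓ < α r → i ≤ α ℓ → i + 1 ≤ α r →
    ¬ (F r (i + 1) ≤ F ℓ i ∧ F ℓ i ≤ F r i))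

/-- `β` is `σ`-extendable to `α` (Definition 3.3). -/
def SigmaExtendable (n : ℕ) (σ : Equiv.Perm (Fin n)) (β α : Fin n → ℕ) : Prop :=
  (∀ i, β i ≤ α i) ∧
  ∀ ℓ r : Fin n, ℓ < r →
    (α r ≤ α ℓ → β r ≤ β ℓ → α r ≤ β ℓ) ∧
    (α ℓ < α r → β ℓ < β r → α ℓ < β r) ∧
    (α r ≤ α ℓ → β ℓ < β r → α r = β r ∧ (σ ℓ : ℕ) < (σ r : ℕ)) ∧
    (α ℓ < α r → β r ≤ β ℓ → α ℓ = β ℓ ∧ (σ r : ℕ) < (σ ℓ : ℕ))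

/-- The set of SSAFs of shape `α` with basement `σ`, with fillings normalized
to be `0` outside the cells of the diagram. -/
def SSAFSet (n : ℕ) (α : Fin n → ℕ) (σ : Equiv.Perm (Fin n)) : Set (Fin n → ℕ → ℕ) :=
  {F | IsSSAF n α σ F ∧ ∀ i j, α i < j → F i j = 0}

namespace SSAFAux

variable {n : ℕ} {α β : Fin n → ℕ} {σ : Equiv.Perm (Fin n)} {F : Fin n → ℕ → ℕ}

/-- Columns are weakly decreasing all the way down to the basement. -/
lemma col_mono (h : IsSSAF n α σ F) (i : Fin n) :
    ∀ {k j : ℕ}, j ≤ k → k ≤ α i → F i k ≤ F i j := by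
  intro k
  induction k with
  | zero =>
    intro j hj _
    obtain rfl := Nat.le_zero.mp hj
    exact le_refl _
  | succ m ih =>
    intro j hj hk
    rcases Nat.lt_or_ge j (m + 1) with hl | hl
    · exact le_trans (h.2.2.1 i m hk)
        (ih (Nat.lt_succ_iff.mp hl) (le_trans (Nat.le_succ m) hk))
    · have : j = m + 1 := le_antisymm hj hl
      subst this; exact le_refl _

/-- The height of the `≥ 2` part of column `i`. -/
def bsh (n : ℕ) (α : Fin n → ℕ) (F : Fin n → ℕ → ℕ) (i : Fin n) : ℕ :=
  Nat.findGreatest (fun j => 2 ≤ F i j) (α i)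

lemma bsh_le (i : Fin n) : bsh n α F i ≤ α i := Nat.findGreatest_le _

lemma bsh_two (h : IsSSAF n α σ F) {i : Fin n} {j : ℕ} (h1 : 1 ≤ j) (h2 : j ≤ bsh n α F i) :
    2 ≤ F i j := by
  have hspec : 2 ≤ F i (bsh n α F i) :=
    Nat.findGreatest_of_ne_zero (P := fun j => 2 ≤ F i j) (n := α i) rfl (by omega)
  exact le_trans hspec (col_mono h i h2 (bsh_le (α := α) (F := F) i))

lemma bsh_one (h : IsSSAF n α σ F) {i : Fin n} {j : ℕ} (h1 : bsh n α F i < j) (h2 : j ≤ α i) :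
    F i j = 1 := by
  have hng : ¬ 2 ≤ F i j :=
    Nat.findGreatest_is_greatest (P := fun j => 2 ≤ F i j) h1 h2
  have hpos := h.1 i j h2
  omega

lemma le_bsh {i : Fin n} {m : ℕ} (hm : m ≤ α i) (h2 : 2 ≤ F i m) : m ≤ bsh n α F i :=
  Nat.le_findGreatest hm h2

lemma sigma_val_ne {ℓ r : Fin n} (hlr : ℓ ≠ r) : (σ ℓ : ℕ) ≠ (σ r : ℕ) :=
  fun hc => hlr (σ.injective (Fin.ext hc))

/-- Type-B chain going up: once `F ℓ s ≤ F r s`, column `r` stays strictly above. -/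
lemma chainB_up (h : IsSSAF n α σ F) {ℓ r : Fin n} (hlr : ℓ < r) (hα : α ℓ < α r)
    {s : ℕ} (hs : F ℓ s ≤ F r s) :
    ∀ k, s ≤ k → k ≤ α ℓ → k + 1 ≤ α r → F ℓ k < F r (k + 1) := by
  intro k hk
  induction k, hk using Nat.le_induction with
  | base =>
    intro h1 h2
    by_contra hc; push_neg at hc
    exact h.2.2.2.2 ℓ r s hlr hα h1 h2 ⟨hc, hs⟩
  | succ k hk ih =>
    intro h1 h2
    have hk1 : F ℓ k < F r (k + 1) :=
      ih (by omega) (by omega)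
    have hle : F ℓ (k + 1) ≤ F r (k + 1) := le_trans (h.2.2.1 ℓ k h1) (le_of_lt hk1)
    by_contra hc; push_neg at hc
    exact h.2.2.2.2 ℓ r (k + 1) hlr hα h1 h2 ⟨hc, hle⟩

/-- Type-A chain going up from a crossing `F r (i+1) ≤ F ℓ i`. -/
lemma chainA_up (h : IsSSAF n α σ F) {ℓ r : Fin n} (hlr : ℓ < r) (hα : α r ≤ α ℓ)
    {i : ℕ} (hstart : F r (i + 1) ≤ F ℓ i) :
    ∀ k, i ≤ k → k + 1 ≤ α r → F r (k + 1) ≤ F ℓ k ∧ F r (k + 1) < F ℓ (k + 1) := by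
  intro k hk
  induction k, hk using Nat.le_induction with
  | base =>
    intro h2
    refine ⟨hstart, ?_⟩
    by_contra hc; push_neg at hc
    exact h.2.2.2.1 ℓ r i hlr hα h2 ⟨hc, hstart⟩
  | succ k hk ih =>
    intro h2
    have hk1 := ih (by omega)
    have hle : F r (k + 2) ≤ F ℓ (k + 1) :=
      le_trans (h.2.2.1 r (k + 1) h2) (le_of_lt hk1.2)
    refine ⟨hle, ?_⟩
    by_contra hc; push_neg at hc
    exact h.2.2.2.1 ℓ r (k + 1) hlr hα h2 ⟨hc, hle⟩

/-- Type-A chain from the basement: `F r 0 < F ℓ 0` propagates upwards. -/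
lemma chainA_up0 (h : IsSSAF n α σ F) {ℓ r : Fin n} (hlr : ℓ < r) (hα : α r ≤ α ℓ)
    (h0 : F r 0 < F ℓ 0) : ∀ k, k ≤ α r → F r k < F ℓ k := by
  intro k
  induction k with
  | zero => intro _; exact h0
  | succ k ih =>
    intro hk
    have hk' := ih (by omega)
    have hle : F r (k + 1) ≤ F ℓ k := le_trans (h.2.2.1 r k hk) (le_of_lt hk')
    by_contra hc; push_neg at hc
    exact h.2.2.2.1 ℓ r k hlr hα hk ⟨hc, hle⟩

/-- Type-B chain going down to the basement. -/
lemma chainB_down (h : IsSSAF n β σ F) {ℓ r : Fin n} (hlr : ℓ < r) (hβ : β ℓ < β r) :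
    ∀ i, i ≤ β ℓ → i + 1 ≤ β r → F r (i + 1) ≤ F ℓ i → F r 0 < F ℓ 0 := by
  intro i
  induction i with
  | zero =>
    intro h1 h2 hle
    by_contra hc; push_neg at hc
    exact h.2.2.2.2 ℓ r 0 hlr hβ h1 h2 ⟨hle, hc⟩
  | succ k ih =>
    intro h1 h2 hle
    have hlt : F r (k + 1) < F ℓ (k + 1) := by
      by_contra hc; push_neg at hc
      exact h.2.2.2.2 ℓ r (k + 1) hlr hβ h1 h2 ⟨hle, hc⟩
    exact ih (by omega) (by omega) (le_trans (le_of_lt hlt) (h.2.2.1 ℓ k h1))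

/-- Type-A chain going down to the basement. -/
lemma chainA_down (h : IsSSAF n β σ F) {ℓ r : Fin n} (hlr : ℓ < r) (hβ : β r ≤ β ℓ) :
    ∀ i, i ≤ β r → F ℓ i ≤ F r i → F ℓ 0 ≤ F r 0 := by
  intro i
  induction i with
  | zero => intro _ hle; exact hle
  | succ k ih =>
    intro h1 hle
    have hlt : F ℓ k < F r (k + 1) := by
      by_contra hc; push_neg at hc
      exact h.2.2.2.1 ℓ r k hlr hβ h1 ⟨hle, hc⟩
    exact ih (by omega) (le_of_lt (lt_of_lt_of_le hlt (h.2.2.1 r k h1)))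

/-- Delete the `1`-cells (truncate to shape `β`). -/
def truncF (n : ℕ) (β : Fin n → ℕ) (F : Fin n → ℕ → ℕ) : Fin n → ℕ → ℕ :=
  fun i j => if j ≤ β i then F i j else 0

/-- Extend a filling of shape `β` by `1`s up to shape `α`. -/
def extF (n : ℕ) (α β : Fin n → ℕ) (F : Fin n → ℕ → ℕ) : Fin n → ℕ → ℕ :=
  fun i j => if j ≤ β i then F i j else if j ≤ α i then 1 else 0

lemma truncF_in (i : Fin n) {j : ℕ} (hj : j ≤ β i) : truncF n β F i j = F i j := if_pos hj

lemma extF_in (i : Fin n) {j : ℕ} (hj : j ≤ β i) : extF n α β F i j = F i j := if_pos hj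

lemma extF_one (i : Fin n) {j : ℕ} (h1 : β i < j) (h2 : j ≤ α i) : extF n α β F i j = 1 := by
  unfold extF
  rw [if_neg (by omega), if_pos h2]

lemma extF_out (i : Fin n) {j : ℕ} (hβ : β i ≤ α i) (h2 : α i < j) : extF n α β F i j = 0 := by
  unfold extF
  rw [if_neg (by omega), if_neg (by omega)]

/-- The shape obtained by deleting the `1`-cells of an SSAF is `σ`-extendable. -/
lemma extendA (h : IsSSAF n α σ F) : SigmaExtendable n σ (bsh n α F) α := by
  refine ⟨fun i => bsh_le i, fun ℓ r hlr => ⟨?_, ?_, ?_, ?_⟩⟩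
  · -- E1 : α r ≤ α ℓ → bsh r ≤ bsh ℓ → α r ≤ bsh ℓ
    intro hα hβ
    by_contra hc; push_neg at hc
    set b := bsh n α F ℓ with hb
    have h1 : F ℓ (b + 1) = 1 := by apply bsh_one h <;> omega
    have h2 : F r (b + 1) = 1 := by apply bsh_one h <;> omega
    exact h.2.2.2.1 ℓ r b hlr hα (by omega)
      ⟨by omega, by rw [h2]; exact h.1 ℓ b (le_trans (bsh_le (α := α) (F := F) ℓ) (le_refl _))⟩
  · -- E2 : α ℓ < α r → bsh ℓ < bsh r → α ℓ < bsh r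
    intro hα hβ
    by_contra hc; push_neg at hc
    set b := bsh n α F r with hb
    have h1 : F r (b + 1) = 1 := by apply bsh_one h <;> omega
    have h2 : F ℓ b = 1 := by apply bsh_one h <;> omega
    exact h.2.2.2.2 ℓ r b hlr hα (by omega) (by omega)
      ⟨by omega, by rw [h2]; exact h.1 r b (le_trans (bsh_le (α := α) (F := F) r) (le_refl _))⟩
  · -- E3
    intro hα hβ
    have hσ : (σ ℓ : ℕ) < (σ r : ℕ) := by
      by_contra hc; push_neg at hc
      have hne : (σ r : ℕ) ≠ (σ ℓ : ℕ) := sigma_val_ne (Fin.ne_of_gt hlr)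
      have h0 : F r 0 < F ℓ 0 := by rw [h.2.1 ℓ, h.2.1 r]; omega
      have hchain := chainA_up0 h hlr hα h0 (bsh n α F ℓ + 1)
        (le_trans (by omega : bsh n α F ℓ + 1 ≤ bsh n α F r) (bsh_le (α := α) (F := F) r))
      have h1 : F ℓ (bsh n α F ℓ + 1) = 1 := bsh_one h (by omega)
        (le_trans (le_trans (by omega : bsh n α F ℓ + 1 ≤ bsh n α F r) (bsh_le (α := α) (F := F) r)) hα)
      have hp : 1 ≤ F r (bsh n α F ℓ + 1) := h.1 r _
        (le_trans (by omega : bsh n α F ℓ + 1 ≤ bsh n α F r) (bsh_le (α := α) (F := F) r))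
      omega
    refine ⟨?_, hσ⟩
    by_contra hne
    have hblt : bsh n α F r < α r := lt_of_le_of_ne (bsh_le (α := α) (F := F) r) (fun hc => hne hc.symm)
    set b := bsh n α F r with hb
    have h1 : F ℓ (b + 1) = 1 := by apply bsh_one h <;> omega
    have h2 : F r (b + 1) = 1 := by apply bsh_one h <;> omega
    have h3 : F ℓ b = 1 := by apply bsh_one h <;> omega
    exact h.2.2.2.1 ℓ r b hlr hα (by omega) ⟨by omega, by omega⟩
  · -- E4
    intro hα hβ
    have hσ : (σ r : ℕ) < (σ ℓ : ℕ) := by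
      by_contra hc; push_neg at hc
      have hne : (σ ℓ : ℕ) ≠ (σ r : ℕ) := sigma_val_ne (Fin.ne_of_lt hlr)
      have h0 : F ℓ 0 ≤ F r 0 := by rw [h.2.1 ℓ, h.2.1 r]; omega
      have hchain := chainB_up h hlr hα h0 (α ℓ) (Nat.zero_le _) (le_refl _) (by omega)
      have h2 : 2 ≤ F r (α ℓ + 1) := by
        have := h.1 ℓ (α ℓ) (le_refl _); omega
      have := le_bsh (by omega : α ℓ + 1 ≤ α r) h2
      have := bsh_le (α := α) (F := F) ℓ
      omega
    refine ⟨?_, hσ⟩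
    by_contra hne
    have hblt : bsh n α F ℓ < α ℓ := lt_of_le_of_ne (bsh_le (α := α) (F := F) ℓ) (fun hc => hne hc.symm)
    set b := bsh n α F ℓ with hb
    have h1 : F ℓ (b + 1) = 1 := by apply bsh_one h <;> omega
    have h2 : F r (b + 1) = 1 := by apply bsh_one h <;> omega
    have h3 : F r (b + 1 + 1) = 1 := by apply bsh_one h <;> omega
    exact h.2.2.2.2 ℓ r (b + 1) hlr hα (by omega) (by omega) ⟨by omega, by omega⟩

/-- Deleting the `1`-cells of an SSAF yields an SSAF of the smaller shape. -/
lemma truncA (h : IsSSAF n α σ F) : IsSSAF n (bsh n α F) σ (truncF n (bsh n α F) F) := by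
  refine ⟨?_, ?_, ?_, ?_, ?_⟩
  · intro i j hj
    rw [truncF_in i hj]
    exact h.1 i j (le_trans hj (bsh_le (α := α) (F := F) i))
  · intro i
    rw [truncF_in i (Nat.zero_le _)]
    exact h.2.1 i
  · intro i j hj
    rw [truncF_in i hj, truncF_in i (by omega)]
    exact h.2.2.1 i j (le_trans hj (bsh_le (α := α) (F := F) i))
  · -- type A for the truncated shape
    intro ℓ r i hlr hβ hi1
    rw [truncF_in r hi1, truncF_in ℓ (le_trans hi1 hβ), truncF_in ℓ (le_trans (by omega) hβ)]
    rcases le_or_gt (α r) (α ℓ) with hα | hα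
    · exact h.2.2.2.1 ℓ r i hlr hα (le_trans hi1 (bsh_le (α := α) (F := F) r))
    · rintro ⟨c1, c2⟩
      have hchain := chainB_up h hlr hα c1 (α ℓ)
        (le_trans (le_trans hi1 hβ) (bsh_le (α := α) (F := F) ℓ)) (le_refl _) (by omega)
      have h2 : 2 ≤ F r (α ℓ + 1) := by
        have := h.1 ℓ (α ℓ) (le_refl _); omega
      have hb := le_bsh (by omega : α ℓ + 1 ≤ α r) h2
      have := le_trans hβ (bsh_le (α := α) (F := F) ℓ)
      omega
  · -- type B for the truncated shape
    intro ℓ r i hlr hβ hi hi1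
    rw [truncF_in r hi1, truncF_in ℓ hi, truncF_in r (by omega)]
    rcases lt_or_ge (α ℓ) (α r) with hα | hα
    · exact h.2.2.2.2 ℓ r i hlr hα (le_trans hi (bsh_le (α := α) (F := F) ℓ)) (le_trans hi1 (bsh_le (α := α) (F := F) r))
    · rintro ⟨c1, c2⟩
      have hchain := (chainA_up h hlr hα c1 (bsh n α F ℓ) hi
        (le_trans (by omega) (bsh_le (α := α) (F := F) r))).2
      have h1 : F ℓ (bsh n α F ℓ + 1) = 1 := bsh_one h (by omega)
        (le_trans (le_trans (by omega) (bsh_le (α := α) (F := F) r)) hα)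
      have hp : 1 ≤ F r (bsh n α F ℓ + 1) := h.1 r _ (le_trans (by omega) (bsh_le (α := α) (F := F) r))
      omega

/-- The extension of a `1`-free SSAF along a `σ`-extendable shape is an SSAF. -/
lemma extB (hext : SigmaExtendable n σ β α) (h : IsSSAF n β σ F)
    (h2 : ∀ i j, 1 ≤ j → j ≤ β i → 2 ≤ F i j) : IsSSAF n α σ (extF n α β F) := by
  have hβα : ∀ i, β i ≤ α i := hext.1
  refine ⟨?_, ?_, ?_, ?_, ?_⟩
  · intro i j hj
    rcases le_or_gt j (β i) with hb | hb
    · rw [extF_in i hb]; exact h.1 i j hb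
    · rw [extF_one i hb hj]
  · intro i
    rw [extF_in i (Nat.zero_le _)]; exact h.2.1 i
  · intro i j hj
    rcases le_or_gt (j + 1) (β i) with hb | hb
    · rw [extF_in i hb, extF_in i (by omega)]; exact h.2.2.1 i j hb
    · rcases le_or_gt j (β i) with hb2 | hb2
      · rw [extF_one i hb hj, extF_in i hb2]; exact h.1 i j hb2
      · rw [extF_one i hb hj, extF_one i hb2 (by omega)]
  · -- type A for α
    intro ℓ r i hlr hα hi1
    rintro ⟨c1, c2⟩
    obtain ⟨hb1, hb2, hb3, hb4⟩ := hext.2 ℓ r hlr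
    have hiαℓ : i ≤ α ℓ := by omega
    rcases le_or_gt (i + 1) (β r) with hcase | hcase
    · have hr2 : 2 ≤ extF n α β F r (i + 1) := by
        rw [extF_in r hcase]; exact h2 r (i + 1) (by omega) hcase
      have hl2 : 2 ≤ extF n α β F ℓ i := le_trans hr2 c2
      have hiβℓ : i ≤ β ℓ := by
        by_contra hcl; push_neg at hcl
        rw [extF_one ℓ hcl hiαℓ] at hl2; omega
      rcases le_or_gt (β r) (β ℓ) with hbb | hbb
      · have hαβ : α r ≤ β ℓ := hb1 hα hbb
        refine h.2.2.2.1 ℓ r i hlr hbb hcase ⟨?_, ?_⟩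
        · rw [← extF_in (α := α) (F := F) ℓ (le_trans hi1 hαβ), ← extF_in (α := α) (F := F) r hcase]; exact c1
        · rw [← extF_in (α := α) (F := F) r hcase, ← extF_in (α := α) (F := F) ℓ hiβℓ]; exact c2
      · obtain ⟨-, hσ⟩ := hb3 hα hbb
        have c2' : F r (i + 1) ≤ F ℓ i := by
          rw [extF_in r hcase, extF_in ℓ hiβℓ] at c2; exact c2
        have := chainB_down h hlr hbb i hiβℓ hcase c2'
        rw [h.2.1 ℓ, h.2.1 r] at this; omega
    · have hr1 : extF n α β F r (i + 1) = 1 := extF_one r hcase hi1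
      have hβℓi : β ℓ ≤ i := by
        by_contra hcl; push_neg at hcl
        have := h2 ℓ (i + 1) (by omega) hcl
        rw [extF_in ℓ (by omega : i + 1 ≤ β ℓ)] at c1
        omega
      rcases le_or_gt (β r) (β ℓ) with hbb | hbb
      · have := hb1 hα hbb; omega
      · obtain ⟨heq, -⟩ := hb3 hα hbb; omega
  · -- type B for α
    intro ℓ r i hlr hα hiℓ hi1
    rintro ⟨c1, c2⟩
    obtain ⟨hb1, hb2, hb3, hb4⟩ := hext.2 ℓ r hlr
    rcases le_or_gt (i + 1) (β r) with hcase | hcase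
    · have hr2 : 2 ≤ F r (i + 1) := h2 r (i + 1) (by omega) hcase
      have hl2 : 2 ≤ extF n α β F ℓ i := by rw [extF_in r hcase] at c1; omega
      have hiβℓ : i ≤ β ℓ := by
        by_contra hcl; push_neg at hcl
        rw [extF_one ℓ hcl hiℓ] at hl2; omega
      have c1' : F r (i + 1) ≤ F ℓ i := by
        rw [extF_in r hcase, extF_in ℓ hiβℓ] at c1; exact c1
      have c2' : F ℓ i ≤ F r i := by
        rw [extF_in ℓ hiβℓ, extF_in r (by omega)] at c2; exact c2
      rcases lt_or_ge (β ℓ) (β r) with hbb | hbb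
      · exact h.2.2.2.2 ℓ r i hlr hbb hiβℓ hcase ⟨c1', c2'⟩
      · obtain ⟨-, hσ⟩ := hb4 hα hbb
        have := chainA_down h hlr hbb i (by omega) c2'
        rw [h.2.1 ℓ, h.2.1 r] at this; omega
    · rcases lt_or_ge (β ℓ) (β r) with hbb | hbb
      · have := hb2 hα hbb; omega
      · obtain ⟨heqℓ, hσ⟩ := hb4 hα hbb
        have hiβℓ : i ≤ β ℓ := by omega
        rcases le_or_gt i (β r) with hir | hir
        · have c2' : F ℓ i ≤ F r i := by
            rw [extF_in ℓ hiβℓ, extF_in r hir] at c2; exact c2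
          have := chainA_down h hlr hbb i hir c2'
          rw [h.2.1 ℓ, h.2.1 r] at this; omega
        · have hri : extF n α β F r i = 1 := extF_one r hir (by omega)
          have hl2 : 2 ≤ F ℓ i := h2 ℓ i (by omega) hiβℓ
          rw [extF_in ℓ hiβℓ, hri] at c2; omega
  
/-- The `2`-region of the extension recovers `β`. -/
lemma bsh_extF (hext : SigmaExtendable n σ β α) (h : IsSSAF n β σ F)
    (h2 : ∀ i j, 1 ≤ j → j ≤ β i → 2 ≤ F i j) : bsh n α (extF n α β F) = β := by
  funext i
  refine le_antisymm ?_ ?_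
  · by_contra hc; push_neg at hc
    have hle : bsh n α (extF n α β F) i ≤ α i := bsh_le i
    have hval : 2 ≤ extF n α β F i (bsh n α (extF n α β F) i) :=
      Nat.findGreatest_of_ne_zero (P := fun j => 2 ≤ extF n α β F i j) (n := α i) rfl (by omega)
    rw [extF_one i hc hle] at hval; omega
  · rcases Nat.eq_zero_or_pos (β i) with h0 | h0
    · omega
    · refine le_bsh (le_trans (le_refl _) (hext.1 i)) ?_
      rw [extF_in i (le_refl _)]
      exact h2 i (β i) h0 (le_refl _)

/-- Truncating the extension recovers the original filling. -/
lemma trunc_extF (hnorm : ∀ i j, β i < j → F i j = 0) :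
    truncF n β (extF n α β F) = F := by
  funext i j
  rcases le_or_gt j (β i) with hb | hb
  · rw [truncF_in i hb, extF_in i hb]
  · unfold truncF
    rw [if_neg (by omega), hnorm i j hb]

/-- Extending the truncation recovers the original filling. -/
lemma ext_truncF (h : IsSSAF n α σ F) (hnorm : ∀ i j, α i < j → F i j = 0) :
    extF n α (bsh n α F) (truncF n (bsh n α F) F) = F := by
  funext i j
  rcases le_or_gt j (bsh n α F i) with hb | hb
  · rw [extF_in i hb, truncF_in i hb]
  · rcases le_or_gt j (α i) with ha | ha
    · rw [extF_one i hb ha, bsh_one h hb ha]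
    · rw [extF_out i (bsh_le (α := α) (F := F) i) ha, hnorm i j ha]

lemma ssaf_bound (h : IsSSAF n α σ F) (hnorm : ∀ i j, α i < j → F i j = 0)
    (i : Fin n) (j : ℕ) : F i j ≤ n := by
  rcases le_or_gt j (α i) with hj | hj
  · have h1 : F i j ≤ F i 0 := col_mono h i (Nat.zero_le j) hj
    have h2 : F i 0 = (σ i : ℕ) + 1 := h.2.1 i
    have h3 : (σ i : ℕ) < n := (σ i).isLt
    omega
  · rw [hnorm i j hj]; exact Nat.zero_le n

lemma ssaf_finite (n : ℕ) (α : Fin n → ℕ) (σ : Equiv.Perm (Fin n)) :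
    (SSAFSet n α σ).Finite := by
  classical
  set M := Finset.univ.sup α with hM
  have hαM : ∀ i, α i ≤ M := fun i => Finset.le_sup (Finset.mem_univ i)
  apply Set.Finite.of_finite_image
    (f := fun F => fun i : Fin n => fun j : Fin (M + 1) => F i (j : ℕ))
  · apply Set.Finite.subset
      (Set.Finite.pi (fun i : Fin n => Set.Finite.pi (fun j : Fin (M + 1) =>
        Set.finite_Iic n)))
    rintro g ⟨F, hF, rfl⟩
    intro i _
    intro j _
    exact ssaf_bound hF.1 hF.2 i (j : ℕ)
  · intro F hF G hG hFG
    funext i j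
    rcases le_or_gt j (α i) with hj | hj
    · have hjM : j < M + 1 := by have := hαM i; omega
      have := congrFun (congrFun hFG i) ⟨j, hjM⟩
      simpa using this
    · rw [hF.2 i j hj, hG.2 i j hj]

lemma ext_set_finite (n : ℕ) (α : Fin n → ℕ) (σ : Equiv.Perm (Fin n)) :
    {β : Fin n → ℕ | SigmaExtendable n σ β α}.Finite := by
  apply Set.Finite.subset (Set.Finite.pi (fun i : Fin n => Set.finite_Iic (α i)))
  intro β hβ
  intro i _
  exact hβ.1 i

end SSAFAux

open SSAFAux in
theorem stmt18 (n : ℕ) (α : Fin n → ℕ) (σ : Equiv.Perm (Fin n)) :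
    Nat.card (SSAFSet n α σ) =
      ∑ᶠ β ∈ {β : Fin n → ℕ | SigmaExtendable n σ β α},
        Nat.card {F ∈ SSAFSet n β σ | ∀ i j, 1 ≤ j → j ≤ β i → F i j ≠ 1} := by
  classical
  have hfinα := ssaf_finite n α σ
  have hfinP := ext_set_finite n α σ
  rw [← hfinP.coe_toFinset, finsum_mem_coe_finset]
  rw [Nat.card_coe_set_eq, Set.ncard_eq_toFinset_card _ hfinα]
  rw [Finset.card_eq_sum_card_fiberwise (f := bsh n α) (t := hfinP.toFinset)
    (fun F hF => by
      rw [Finset.mem_coe, Set.Finite.mem_toFinset] at hF ⊢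
      exact extendA hF.1)]
  apply Finset.sum_congr rfl
  intro β hβ
  rw [Set.Finite.mem_toFinset] at hβ
  have hTfin : ({F ∈ SSAFSet n β σ | ∀ i j, 1 ≤ j → j ≤ β i → F i j ≠ 1} :
      Set (Fin n → ℕ → ℕ)).Finite :=
    Set.Finite.subset (ssaf_finite n β σ) (fun F hF => hF.1)
  rw [Nat.card_coe_set_eq, Set.ncard_eq_toFinset_card _ hTfin]
  apply Finset.card_nbij' (i := truncF n β) (j := extF n α β)
  · -- forward map lands in the target
    intro F hF
    rw [Finset.mem_coe, Finset.mem_filter, Set.Finite.mem_toFinset] at hF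
    obtain ⟨⟨h1, h2⟩, hfib⟩ := hF
    subst hfib
    rw [Finset.mem_coe, Set.Finite.mem_toFinset]
    refine ⟨⟨truncA h1, ?_⟩, ?_⟩
    · intro i j hj
      unfold truncF
      rw [if_neg (by omega)]
    · intro i j hj1 hj2
      rw [truncF_in i hj2]
      have := bsh_two h1 hj1 hj2
      omega
  · -- inverse map lands in the fiber
    intro F hF
    rw [Finset.mem_coe, Set.Finite.mem_toFinset] at hF
    obtain ⟨⟨h1, h2⟩, hno1⟩ := hF
    have h2' : ∀ i j, 1 ≤ j → j ≤ β i → 2 ≤ F i j := by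
      intro i j hj1 hj2
      have := h1.1 i j (hj2)
      have := hno1 i j hj1 hj2
      omega
    rw [Finset.mem_coe, Finset.mem_filter, Set.Finite.mem_toFinset]
    refine ⟨⟨extB hβ h1 h2', ?_⟩, bsh_extF hβ h1 h2'⟩
    intro i j hj
    exact extF_out i (hβ.1 i) hj
  · -- left inverse
    intro F hF
    rw [Finset.mem_coe, Finset.mem_filter, Set.Finite.mem_toFinset] at hF
    obtain ⟨⟨h1, h2⟩, hfib⟩ := hF
    subst hfib
    exact ext_truncF h1 h2
  · -- right inverse
    intro F hF
    rw [Finset.mem_coe, Set.Finite.mem_toFinset] at hF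
    obtain ⟨⟨h1, h2⟩, hno1⟩ := hF
    exact trunc_extF h2
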